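/- arXiv:1310.8461 — 3 statements merged into one kernel-verified Lean document; each statement's English description precedes it below -/
import Mathlib

section
/- Let A be a nonnegative tensor of order m and dimension n. The following are equivalent: (1) a_{ij…j} > 0 for all i, j ∈ [n]; (2) A·e_j > 0 (entrywise) for every standard basis vector e_j; (3) A·x > 0 (entrywise) for every nonnegative nonzero vector x ∈ ℝⁿ, where (A x)_i = Σ_{i₂,…,i_m} a_{i i₂ ⋯ i_m} x_{i₂} ⋯ x_{i_m}. -/
open Finset

/- An order-`m` dimension-`n` nonnegative tensor is encoded as
`A : Fin n → (Fin (m-1) → Fin n) → ℝ`, with `A i t = a_{i t₁ ⋯ t_{m-1}}`. -/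

/-- The majorization matrix `M(A)_{ij} = a_{ij⋯j}`. -/
def maj (n m : ℕ) (A : Fin n → (Fin (m-1) → Fin n) → ℝ) :
    Matrix (Fin n) (Fin n) ℝ :=
  fun i j => A i (fun _ => j)

/-- The majorization matrices of the Shao-product powers of `A`:
`majPow n m A k = M(A^k)`, via the recursion
`M(A^{k+1})_{uj} = Σ_{j₂,…,j_m} a_{u j₂ ⋯ j_m} M(A^k)_{j₂ j} ⋯ M(A^k)_{j_m j}`
(with `M(A^0)` the identity, so that `majPow n m A 1 = maj n m A`). -/
def majPow (n m : ℕ) (A : Fin n → (Fin (m-1) → Fin n) → ℝ) :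
    ℕ → Matrix (Fin n) (Fin n) ℝ
  | 0 => 1
  | k + 1 => fun u j =>
      ∑ t : Fin (m-1) → Fin n, A u t * ∏ i, majPow n m A k (t i) j

/-- `A` is primitive: `M(A^r) > 0` entrywise for some positive `r`. -/
def Primitive (n m : ℕ) (A : Fin n → (Fin (m-1) → Fin n) → ℝ) : Prop :=
  ∃ r, 0 < r ∧ ∀ u j, 0 < majPow n m A r u j

/-- `(A x)_i = Σ_{i₂,…,i_m} a_{i i₂ ⋯ i_m} x_{i₂} ⋯ x_{i_m}`. -/
def tApply (n m : ℕ) (A : Fin n → (Fin (m-1) → Fin n) → ℝ)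
    (x : Fin n → ℝ) : Fin n → ℝ :=
  fun i => ∑ t : Fin (m-1) → Fin n, A i t * ∏ k, x (t k)

lemma tApply_single (n m : ℕ) (A : Fin n → (Fin (m-1) → Fin n) → ℝ) (j i : Fin n) :
    tApply n m A (Pi.single j 1) i = A i (fun _ => j) := by
  refine (Finset.sum_eq_single (fun _ => j) (fun t _ ht => ?_) (by simp)).trans (by simp)
  obtain ⟨k, hk⟩ : ∃ k, t k ≠ j := by
    by_contra! h
    exact ht (funext h)
  rw [Finset.prod_eq_zero (Finset.mem_univ k) (Pi.single_eq_of_ne hk 1), mul_zero]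

lemma diag_mul_pow_le_tApply (n m : ℕ) (A : Fin n → (Fin (m-1) → Fin n) → ℝ)
    (hA : ∀ u t, 0 ≤ A u t) {x : Fin n → ℝ} (hx : 0 ≤ x) (i j : Fin n) :
    A i (fun _ => j) * x j ^ (m - 1) ≤ tApply n m A x i := by
  have hterm : A i (fun _ => j) * x j ^ (m - 1) = A i (fun _ => j) * ∏ _ : Fin (m-1), x j := by
    simp
  rw [hterm]
  exact Finset.single_le_sum (f := fun t => A i t * ∏ k, x (t k))
    (fun t _ => mul_nonneg (hA i t) (Finset.prod_nonneg fun k _ => hx (t k)))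
    (Finset.mem_univ _)

lemma tApply_pos_of_diag_pos (n m : ℕ) (A : Fin n → (Fin (m-1) → Fin n) → ℝ)
    (hA : ∀ u t, 0 ≤ A u t) (hdiag : ∀ i j, 0 < A i (fun _ => j))
    {x : Fin n → ℝ} (hx : 0 ≤ x) (hx0 : x ≠ 0) (i : Fin n) : 0 < tApply n m A x i := by
  obtain ⟨j, hj⟩ := (Pi.lt_def.mp (lt_of_le_of_ne hx (Ne.symm hx0))).2
  exact (mul_pos (hdiag i j) (pow_pos hj _)).trans_le (diag_mul_pow_le_tApply n m A hA hx i j)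

theorem stmt_1_general (n m : ℕ)
    (A : Fin n → (Fin (m-1) → Fin n) → ℝ) (hA : ∀ u t, 0 ≤ A u t) :
    ((∀ i j : Fin n, 0 < A i (fun _ => j)) ↔
      (∀ j i : Fin n, 0 < tApply n m A (Pi.single j 1) i)) ∧
    ((∀ j i : Fin n, 0 < tApply n m A (Pi.single j 1) i) ↔
      (∀ x : Fin n → ℝ, (∀ k, 0 ≤ x k) → x ≠ 0 →
        ∀ i, 0 < tApply n m A x i)) := by
  simp only [tApply_single]
  refine ⟨forall_comm, ⟨fun h x hx hx0 => ?_, fun h j => ?_⟩⟩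
  · exact tApply_pos_of_diag_pos n m A hA (fun i j => h j i) hx hx0
  · simpa only [tApply_single] using
      h (Pi.single j 1) (Pi.single_nonneg.mpr zero_le_one : (0 : Fin n → ℝ) ≤ _) (by simp)

/-- equivalence of the three conditions for essential positivity. -/
theorem stmt_1 (n m : ℕ) (hm : 2 ≤ m)
    (A : Fin n → (Fin (m-1) → Fin n) → ℝ) (hA : ∀ u t, 0 ≤ A u t) :
    ((∀ i j : Fin n, 0 < A i (fun _ => j)) ↔
      (∀ j i : Fin n, 0 < tApply n m A (Pi.single j 1) i)) ∧
    ((∀ j i : Fin n, 0 < tApply n m A (Pi.single j 1) i) ↔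
      (∀ x : Fin n → ℝ, (∀ k, 0 ≤ x k) → x ≠ 0 →
        ∀ i, 0 < tApply n m A x i)) :=
  stmt_1_general n m A hA
end

section
/- Let A be a nonnegative tensor of order m and dimension n such that every column of M(A) contains at most one positive entry. Then for every positive integer t, every column of M(A^t) contains at most one positive entry. In particular A is not primitive (for n ≥ 2). -/
open Finset

def ColumnPosSubsingleton {ι : Type*} (M : Matrix ι ι ℝ) : Prop :=
  ∀ j, {u | 0 < M u j}.Subsingleton

theorem ColumnPosSubsingleton.not_forall_pos {ι : Type*} [Nontrivial ι] {M : Matrix ι ι ℝ}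
    (hM : ColumnPosSubsingleton M) : ¬ ∀ u j, 0 < M u j := by
  intro hpos
  obtain ⟨u, v, huv⟩ := exists_pair_ne ι
  exact huv (hM u (hpos u u) (hpos v u))

section majPow

variable {n m : ℕ} {A : Fin n → (Fin (m-1) → Fin n) → ℝ}

theorem majPow_nonneg (hA : ∀ u t, 0 ≤ A u t) (k : ℕ) (u j : Fin n) :
    0 ≤ majPow n m A k u j := by
  induction k generalizing u with
  | zero => by_cases huj : u = j <;> simp [majPow, Matrix.one_apply, huj]
  | succ k ih =>
    exact Finset.sum_nonneg fun t _ =>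
      mul_nonneg (hA u t) (Finset.prod_nonneg fun i _ => ih (t i))

theorem exists_pos_term_of_majPow_succ_pos (hA : ∀ u t, 0 ≤ A u t) {k : ℕ} {w j : Fin n}
    (hw : 0 < majPow n m A (k + 1) w j) :
    ∃ t, 0 < A w t ∧ ∀ i, 0 < majPow n m A k (t i) j := by
  obtain ⟨t, -, ht⟩ := Finset.exists_lt_of_sum_lt (s := Finset.univ) (f := fun _ => (0 : ℝ))
    (by simpa [majPow] using hw)
  have hprod_nonneg : 0 ≤ ∏ i, majPow n m A k (t i) j :=
    Finset.prod_nonneg fun i _ => majPow_nonneg hA k _ j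
  have hprod_ne : ∏ i, majPow n m A k (t i) j ≠ 0 := (pos_of_mul_pos_right ht (hA w t)).ne'
  refine ⟨t, pos_of_mul_pos_left ht hprod_nonneg, fun i => ?_⟩
  exact (majPow_nonneg hA k _ j).lt_of_ne (Finset.prod_ne_zero_iff.mp hprod_ne i (mem_univ i)).symm

/-- A positive term of the sum defining `M(A^{k+1})_{wj}` has all its indices in the support of
column `j` of `M(A^k)`; if that support lies in `{x}`, the term is `a_{wx⋯x} = M(A)_{wx}`. -/
theorem maj_pos_of_majPow_succ_pos (hA : ∀ u t, 0 ≤ A u t) {k : ℕ} {w j x : Fin n}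
    (hx : {y | 0 < majPow n m A k y j} ⊆ {x}) (hw : 0 < majPow n m A (k + 1) w j) :
    0 < maj n m A w x := by
  obtain ⟨t, hAt, hcol⟩ := exists_pos_term_of_majPow_succ_pos hA hw
  have ht : t = fun _ => x := funext fun i => hx (hcol i)
  rw [ht] at hAt
  exact hAt

theorem columnPosSubsingleton_majPow (hA : ∀ u t, 0 ≤ A u t)
    (h : ColumnPosSubsingleton (maj n m A)) (k : ℕ) :
    ColumnPosSubsingleton (majPow n m A k) := by
  induction k with
  | zero =>
    intro j u hu v hv
    by_cases hu' : u = j <;> by_cases hv' : v = j <;>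
      simp_all [majPow, Matrix.one_apply]
  | succ k ih =>
    intro j u hu v hv
    obtain ⟨x, hx⟩ : ∃ x, {y | 0 < majPow n m A k y j} ⊆ {x} := by
      rcases (ih j).eq_empty_or_singleton with hempty | ⟨x, hx⟩
      · exact ⟨u, hempty ▸ Set.empty_subset _⟩
      · exact ⟨x, hx.subset⟩
    exact h x (maj_pos_of_majPow_succ_pos hA hx hu) (maj_pos_of_majPow_succ_pos hA hx hv)

end majPow

theorem stmt_5_general (n m : ℕ)
    (A : Fin n → (Fin (m-1) → Fin n) → ℝ) (hA : ∀ u t, 0 ≤ A u t)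
    (h : ∀ j u v : Fin n, 0 < maj n m A u j → 0 < maj n m A v j → u = v) :
    (∀ t : ℕ, 1 ≤ t → ∀ j u v : Fin n,
       0 < majPow n m A t u j → 0 < majPow n m A t v j → u = v) ∧
    (2 ≤ n → ¬ Primitive n m A) := by
  have hcol := columnPosSubsingleton_majPow hA fun j u hu v hv => h j u v hu hv
  refine ⟨fun t _ j u v hu hv => hcol t j hu hv, fun hn ⟨r, _, hpos⟩ => ?_⟩
  have : Nontrivial (Fin n) := Fin.nontrivial_iff_two_le.mpr hn
  exact (hcol r).not_forall_pos hpos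

/-- if every column of `M(A)` has at most one positive entry,
the same holds for every `M(A^t)`; in particular `A` is not primitive when `n ≥ 2`. -/
theorem stmt_5 (n m : ℕ) (hm : 2 ≤ m)
    (A : Fin n → (Fin (m-1) → Fin n) → ℝ) (hA : ∀ u t, 0 ≤ A u t)
    (h : ∀ j u v : Fin n, 0 < maj n m A u j → 0 < maj n m A v j → u = v) :
    (∀ t : ℕ, 1 ≤ t → ∀ j u v : Fin n,
       0 < majPow n m A t u j → 0 < majPow n m A t v j → u = v) ∧
    (2 ≤ n → ¬ Primitive n m A) :=
  stmt_5_general n m A hA h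
end

section
/- Let A be a nonnegative primitive tensor of order m and dimension n ≥ 2. Then the primitive degree satisfies γ(A) ≤ (n−1)² + 1, i.e., M(A^{(n−1)²+1}) is entrywise positive. -/
open Finset

/-!
The positivity pattern of `M(A^k)` is Boolean: `M(A^{k+1})_{uj} > 0` iff some `t` with
`a_{ut} > 0` has every `M(A^k)_{t_i j} > 0`. Call `w → a` an edge when `M(A)_{wa} > 0`.
Primitivity forces every vertex to have an in-neighbour (follow the first index of `t`
backwards), and some vertex to have two: otherwise each column of `M(A^k)` has exactly one
positive entry for every `k`. A Wielandt-type walk argument then gives, for every `j`, a closed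
walk of length `1 ≤ p ≤ n - 1` at a vertex `v` joined to `j` by a walk of length `i ≤ n - p`.
Since `M(A^p)_{vv} > 0`, the positive part of column `v` of `M(A^{tp})` grows with `t`, and
strictly until it is everything (a stall would make it periodic, against primitivity); so
column `v` of `M(A^{(n-1)p})` is positive, hence so is column `j` of `M(A^{i+(n-1)p})`, and
`i + (n-1)p ≤ (n-1)² + 1`.
-/

theorem Finset.eq_univ_of_chain_stalls_only_at_univ {α : Type*} [Fintype α]
    (S : ℕ → Finset α) (h0 : (S 0).Nonempty) (hmono : ∀ t, S t ⊆ S (t + 1))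
    (hstall : ∀ t, S (t + 1) ⊆ S t → S t = univ) :
    S (Fintype.card α - 1) = univ := by
  have hgrow : ∀ t, S t = univ ∨ t + 1 ≤ #(S t) := by
    intro t
    induction t with
    | zero => exact .inr h0.card_pos
    | succ t ih =>
      by_cases hst : S (t + 1) ⊆ S t
      · exact .inl (univ_subset_iff.mp (hstall t hst ▸ hmono t))
      rcases ih with h | h
      · exact .inl (univ_subset_iff.mp (h ▸ hmono t))
      · have := card_lt_card (ssubset_def.mpr ⟨hmono t, hst⟩)
        exact .inr (by omega)
  rcases hgrow (Fintype.card α - 1) with h | h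
  · exact h
  · have := h0.card_pos.trans_le (card_le_univ (S 0))
    exact eq_univ_of_card _ (le_antisymm (card_le_univ _) (by omega))

section Positivity

variable {n m : ℕ} {A : Fin n → (Fin (m-1) → Fin n) → ℝ}

theorem majPow_zero_pos_iff {u j : Fin n} : 0 < majPow n m A 0 u j ↔ u = j := by
  by_cases h : u = j <;> simp [majPow, Matrix.one_apply, h]

theorem majPow_succ_pos_iff (hA : ∀ u t, 0 ≤ A u t) {k : ℕ} {u j : Fin n} :
    0 < majPow n m A (k + 1) u j ↔
      ∃ t, 0 < A u t ∧ ∀ i, 0 < majPow n m A k (t i) j := by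
  have hterm : ∀ t, 0 ≤ A u t * ∏ i, majPow n m A k (t i) j := fun t =>
    mul_nonneg (hA u t) (prod_nonneg fun i _ => majPow_nonneg hA k _ j)
  simp only [majPow, sum_pos_iff_of_nonneg fun t _ => hterm t, mem_univ, true_and]
  refine exists_congr fun t =>
    ⟨fun h => ?_, fun ⟨ht, hall⟩ => mul_pos ht (prod_pos fun i _ => hall i)⟩
  have hprod := pos_of_mul_pos_right h (hA u t)
  refine ⟨pos_of_mul_pos_left h (prod_nonneg fun i _ => majPow_nonneg hA k _ j), fun i => ?_⟩
  exact (majPow_nonneg hA k _ j).lt_of_ne fun h0 => hprod.ne' (prod_eq_zero (mem_univ i) h0.symm)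

theorem majPow_add_pos (hA : ∀ u t, 0 ≤ A u t) {a b : ℕ} {u v j : Fin n}
    (huv : 0 < majPow n m A a u v) (hvj : 0 < majPow n m A b v j) :
    0 < majPow n m A (a + b) u j := by
  induction a generalizing u with
  | zero => rwa [majPow_zero_pos_iff.mp huv, zero_add]
  | succ a ih =>
    obtain ⟨t, ht, hall⟩ := (majPow_succ_pos_iff hA).mp huv
    rw [add_right_comm]
    exact (majPow_succ_pos_iff hA).mpr ⟨t, ht, fun i => ih (hall i)⟩

theorem majPow_pos_of_le (hA : ∀ u t, 0 ≤ A u t) (hrow : ∀ u, ∃ t, 0 < A u t) {j : Fin n}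
    {k K : ℕ} (hkK : k ≤ K) (h : ∀ u, 0 < majPow n m A k u j) (u : Fin n) :
    0 < majPow n m A K u j := by
  induction K, hkK using Nat.le_induction generalizing u with
  | base => exact h u
  | succ K _ ih =>
    obtain ⟨t, ht⟩ := hrow u
    exact (majPow_succ_pos_iff hA).mpr ⟨t, ht, fun i => ih _⟩

theorem exists_majPow_pos_of_le (hA : ∀ u t, 0 ≤ A u t) (hm : 2 ≤ m) {k K : ℕ} {w a : Fin n}
    (h : 0 < majPow n m A K w a) (hkK : k ≤ K) : ∃ w', 0 < majPow n m A k w' a := by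
  induction K generalizing w with
  | zero => exact ⟨w, by rwa [Nat.le_zero.mp hkK]⟩
  | succ K ih =>
    rcases hkK.eq_or_lt with rfl | hlt
    · exact ⟨w, h⟩
    obtain ⟨t, -, hall⟩ := (majPow_succ_pos_iff hA).mp h
    exact ih (hall ⟨0, by omega⟩) (Nat.le_of_lt_succ hlt)

theorem Primitive.exists_pos_row (hA : ∀ u t, 0 ≤ A u t) (hprim : Primitive n m A) (u : Fin n) :
    ∃ t, 0 < A u t := by
  obtain ⟨r, hr0, hr⟩ := hprim
  obtain ⟨r, rfl⟩ := Nat.exists_eq_add_of_lt hr0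
  obtain ⟨t, ht, -⟩ := (majPow_succ_pos_iff hA).mp (hr u u)
  exact ⟨t, ht⟩

theorem majPow_add_pos_iff_of_pos_iff (hA : ∀ u t, 0 ≤ A u t) {k k' : ℕ} {v v' : Fin n}
    (h : ∀ u, 0 < majPow n m A k u v ↔ 0 < majPow n m A k' u v') (d : ℕ) (u : Fin n) :
    0 < majPow n m A (k + d) u v ↔ 0 < majPow n m A (k' + d) u v' := by
  induction d generalizing u with
  | zero => exact h u
  | succ d ih =>
    simp only [← add_assoc, majPow_succ_pos_iff hA, ih]

theorem majPow_add_mul_pos_iff_of_period (hA : ∀ u t, 0 ≤ A u t) {k p : ℕ} {v : Fin n}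
    (h : ∀ u, 0 < majPow n m A k u v ↔ 0 < majPow n m A (k + p) u v) (a : ℕ) (u : Fin n) :
    0 < majPow n m A (k + a * p) u v ↔ 0 < majPow n m A k u v := by
  induction a generalizing u with
  | zero => simp
  | succ a ih =>
    rw [← ih, add_one_mul, add_comm (a * p), ← add_assoc]
    exact (majPow_add_pos_iff_of_pos_iff hA (fun u => (h u).symm) _ u)

theorem majPow_pos_of_closed_walk (hA : ∀ u t, 0 ≤ A u t) (hprim : Primitive n m A) {p : ℕ}
    {v : Fin n} (hp : 1 ≤ p) (hvv : 0 < majPow n m A p v v) (u : Fin n) :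
    0 < majPow n m A ((n - 1) * p) u v := by
  have hrow := hprim.exists_pos_row hA
  obtain ⟨r, -, hr⟩ := hprim
  let S : ℕ → Finset (Fin n) := fun t => {u | 0 < majPow n m A (t * p) u v}
  have hmono : ∀ t, S t ⊆ S (t + 1) := fun t u hu => by
    simp only [S, mem_filter, mem_univ, true_and, add_one_mul] at hu ⊢
    exact majPow_add_pos hA hu hvv
  have hstall : ∀ t, S (t + 1) ⊆ S t → S t = univ := by
    intro t hsub
    have hper (u : Fin n) :
        0 < majPow n m A (t * p) u v ↔ 0 < majPow n m A (t * p + p) u v := by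
      simpa [S, add_one_mul] using Finset.ext_iff.mp (Subset.antisymm (hmono t) hsub) u
    have hlate : r ≤ t * p + r * p := le_add_left (Nat.le_mul_of_pos_right r hp)
    refine eq_univ_of_forall fun u => ?_
    simpa [S] using (majPow_add_mul_pos_iff_of_period hA hper r u).mp
      (majPow_pos_of_le hA hrow hlate (hr · v) u)
  have hv : (S 0).Nonempty := ⟨v, by simp [S, majPow_zero_pos_iff]⟩
  simpa [S] using (eq_univ_of_chain_stalls_only_at_univ S hv hmono hstall).ge (mem_univ u)

theorem majPow_pos_of_walk (hA : ∀ u t, 0 ≤ A u t) {f : ℕ → Fin n}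
    (hf : ∀ t, 0 < majPow n m A 1 (f (t + 1)) (f t)) (a s : ℕ) :
    0 < majPow n m A s (f (a + s)) (f a) := by
  induction s with
  | zero => exact majPow_zero_pos_iff.mpr rfl
  | succ s ih => simpa only [add_comm 1 s, ← add_assoc] using majPow_add_pos hA (hf (a + s)) ih

theorem eq_of_majPow_pos_of_unique_in_neighbour (hA : ∀ u t, 0 ≤ A u t) (hm : 2 ≤ m)
    (huniq : ∀ a w w', 0 < majPow n m A 1 w a → 0 < majPow n m A 1 w' a → w = w') (k : ℕ)
    {w w' j : Fin n} (hw : 0 < majPow n m A k w j) (hw' : 0 < majPow n m A k w' j) : w = w' := by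
  induction k generalizing w w' with
  | zero => exact (majPow_zero_pos_iff.mp hw).trans (majPow_zero_pos_iff.mp hw').symm
  | succ k ih =>
    let i₀ : Fin (m - 1) := ⟨0, by omega⟩
    obtain ⟨t, ht, hall⟩ := (majPow_succ_pos_iff hA).mp hw
    obtain ⟨t', ht', hall'⟩ := (majPow_succ_pos_iff hA).mp hw'
    -- all entries of `t` lie in the singleton positive part of the column, so `t` is constant
    have hwt : 0 < majPow n m A 1 w (t i₀) := (majPow_succ_pos_iff hA).mpr
      ⟨t, ht, fun i => majPow_zero_pos_iff.mpr (ih (hall i) (hall i₀))⟩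
    have hwt' : 0 < majPow n m A 1 w' (t i₀) := (majPow_succ_pos_iff hA).mpr
      ⟨t', ht', fun i => majPow_zero_pos_iff.mpr (ih (hall' i) (hall i₀))⟩
    exact huniq _ _ _ hwt hwt'

theorem Primitive.exists_two_in_neighbours (hA : ∀ u t, 0 ≤ A u t) (hm : 2 ≤ m) (hn : 2 ≤ n)
    (hprim : Primitive n m A) :
    ∃ a x y, x ≠ y ∧ 0 < majPow n m A 1 x a ∧ 0 < majPow n m A 1 y a := by
  by_contra! huniq
  obtain ⟨r, -, hr⟩ := hprim
  let j : Fin n := ⟨0, by omega⟩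
  have := eq_of_majPow_pos_of_unique_in_neighbour hA hm
    (fun a w w' hw hw' => by_contra fun hne => (huniq a w w' hne hw).not_gt hw') r
    (hr ⟨0, by omega⟩ j) (hr ⟨1, by omega⟩ j)
  simp [Fin.ext_iff] at this

theorem exists_short_cycle_of_hamiltonian (hA : ∀ u t, 0 ≤ A u t) {f : ℕ → Fin n}
    (hf : ∀ t, 0 < majPow n m A 1 (f (t + 1)) (f t)) (hsurj : ∀ a, ∃ c < n, f c = a)
    (hcyc : f n = f 0) {a x y : Fin n} (hxy : x ≠ y) (hx : 0 < majPow n m A 1 x a)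
    (hy : 0 < majPow n m A 1 y a) :
    ∃ v i p, 1 ≤ p ∧ p ≤ n - 1 ∧ i + p ≤ n ∧
      0 < majPow n m A i v (f 0) ∧ 0 < majPow n m A p v v := by
  have walk := majPow_pos_of_walk hA hf
  obtain ⟨c, hc, rfl⟩ := hsurj a
  obtain ⟨z, hz, hzc⟩ : ∃ z, 0 < majPow n m A 1 z (f c) ∧ z ≠ f (c + 1) := by
    by_cases hxc : x = f (c + 1)
    · exact ⟨y, hy, hxc ▸ hxy.symm⟩
    · exact ⟨x, hx, hxc⟩
  obtain ⟨d, hd, rfl⟩ := hsurj z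
  rcases le_or_gt d c with hdc | hcd
  · -- the chord closes the cycle `f d → f c → f (c - 1) → ⋯ → f d`
    have hshort : ¬(d = 0 ∧ c = n - 1) := by
      rintro ⟨rfl, rfl⟩
      exact hzc (by rw [Nat.sub_add_cancel (by omega), hcyc])
    have hret := walk d (c - d)
    rw [Nat.add_sub_cancel' hdc] at hret
    refine ⟨f d, d, 1 + (c - d), by omega, by omega, by omega, ?_, majPow_add_pos hA hz hret⟩
    simpa using walk 0 d
  · -- the chord skips `f (c + 1), …, f (d - 1)`, leaving a cycle through `f 0 = f n`
    have hdc : c + 2 ≤ d := by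
      by_contra
      exact hzc (congrArg f (by omega))
    have hnd := walk d (n - d)
    rw [Nat.add_sub_cancel' hd.le, hcyc] at hnd
    refine ⟨f 0, 0, n - d + 1 + c, by omega, by omega, by omega,
      majPow_zero_pos_iff.mpr rfl, ?_⟩
    have hc0 := walk 0 c
    rw [zero_add] at hc0
    simpa using majPow_add_pos hA (majPow_add_pos hA hnd hz) hc0

theorem exists_short_cycle (hA : ∀ u t, 0 ≤ A u t) (hm : 2 ≤ m) (hn : 2 ≤ n)
    (hprim : Primitive n m A) (j : Fin n) :
    ∃ v i p, 1 ≤ p ∧ p ≤ n - 1 ∧ i + p ≤ n ∧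
      0 < majPow n m A i v j ∧ 0 < majPow n m A p v v := by
  obtain ⟨a, x, y, hxy, hx, hy⟩ := hprim.exists_two_in_neighbours hA hm hn
  obtain ⟨r, hr0, hr⟩ := hprim
  choose next hnext using fun a => exists_majPow_pos_of_le hA hm (hr a a) hr0
  let f : ℕ → Fin n := fun t => next^[t] j
  have hf (t : ℕ) : 0 < majPow n m A 1 (f (t + 1)) (f t) := by
    simpa only [f, Function.iterate_succ_apply'] using hnext (f t)
  have walk := majPow_pos_of_walk hA hf
  -- a repetition of the backward walk `f` other than `f 0 = f n` closes a short cycle;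
  -- without one, `f` runs once around a Hamiltonian cycle
  by_cases hrep : ∃ i k, i < k ∧ k ≤ n ∧ k - i ≤ n - 1 ∧ f i = f k
  · obtain ⟨i, k, hik, hkn, hkin, hfik⟩ := hrep
    have hret := walk i (k - i)
    rw [Nat.add_sub_cancel' hik.le, ← hfik] at hret
    exact ⟨f i, i, k - i, by omega, hkin, by omega, by simpa [f] using walk 0 i, hret⟩
  push Not at hrep
  have hinj : Function.Injective fun c : Fin n => f c := by
    intro c c' hcc
    by_contra hne
    rcases lt_or_gt_of_ne (Fin.val_ne_of_ne hne) with h | h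
    · exact hrep c c' h c'.2.le (by omega) hcc
    · exact hrep c' c h c.2.le (by omega) hcc.symm
  have hsurj (a : Fin n) : ∃ c < n, f c = a := by
    obtain ⟨c, hc⟩ := Finite.injective_iff_surjective.mp hinj a
    exact ⟨c, c.2, hc⟩
  have hcyc : f n = f 0 := by
    obtain ⟨c, hc, hfc⟩ := hsurj (f n)
    obtain rfl : c = 0 := by
      by_contra
      exact hrep c n (by omega) le_rfl (by omega) hfc
    exact hfc.symm
  exact exists_short_cycle_of_hamiltonian hA hf hsurj hcyc hxy hx hy

end Positivity

/-- the primitive degree of a primitive tensor satisfies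
`γ(A) ≤ (n-1)² + 1`, i.e. `M(A^{(n-1)²+1})` is entrywise positive. -/
theorem stmt_18 (n m : ℕ) (hm : 2 ≤ m) (hn : 2 ≤ n)
    (A : Fin n → (Fin (m-1) → Fin n) → ℝ) (hA : ∀ u t, 0 ≤ A u t)
    (hprim : Primitive n m A) :
    sInf {r : ℕ | 0 < r ∧ ∀ u j : Fin n, 0 < majPow n m A r u j}
        ≤ (n - 1) ^ 2 + 1 ∧
      ∀ u j : Fin n, 0 < majPow n m A ((n - 1) ^ 2 + 1) u j := by
  have hpos (u j : Fin n) : 0 < majPow n m A ((n - 1) ^ 2 + 1) u j := by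
    obtain ⟨v, i, p, hp, hpn, hip, hvj, hvv⟩ := exists_short_cycle hA hm hn hprim j
    have hbound : (n - 1) * p + i ≤ (n - 1) ^ 2 + 1 := by
      obtain ⟨k, rfl⟩ : ∃ k, n = k + 1 := ⟨n - 1, by omega⟩
      simp only [Nat.add_sub_cancel] at hpn hip ⊢
      nlinarith
    refine majPow_pos_of_le hA (hprim.exists_pos_row hA) hbound (fun w => ?_) u
    exact majPow_add_pos hA (majPow_pos_of_closed_walk hA hprim hp hvv w) hvj
  exact ⟨Nat.sInf_le ⟨Nat.succ_pos _, hpos⟩, hpos⟩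
end
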